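/- In the BR-reduction election for a 3-CNF formula Φ with p variables and q clauses, for every assignment σ : Fin p → Bool, every candidate other than the anchors x⊤ and x⊥ receives at most q votes in the tally t_σ, which is strictly fewer than the q + 2 votes of x⊤; consequently the general-election winner under σ is always x⊤ or x⊥. -/

import Mathlib

/-! Common framework: 3-CNF formulas and the BR-reduction election. -/

/-- A literal over `p` variables: a variable index together with a polarity. -/
abbrev Lit (p : ℕ) := Fin p × Bool

/-- A 3-clause: a triple of literals. -/
abbrev Clause3 (p : ℕ) := Lit p × Lit p × Lit p

/-- A 3-CNF formula: a finite list of 3-clauses. -/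
abbrev CNF3 (p : ℕ) := List (Clause3 p)

/-- A literal `(k, ε)` is true under assignment `σ` iff `σ k = ε`. -/
def litTrue {p : ℕ} (σ : Fin p → Bool) (l : Lit p) : Bool := σ l.1 == l.2

/-- An assignment satisfies a clause iff some literal of the clause is true. -/
def satClause {p : ℕ} (σ : Fin p → Bool) (c : Clause3 p) : Bool :=
  litTrue σ c.1 || litTrue σ c.2.1 || litTrue σ c.2.2

/-- An assignment satisfies a 3-CNF formula iff it satisfies every clause. -/
def Satisfies {p : ℕ} (σ : Fin p → Bool) (Φ : CNF3 p) : Prop :=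
  ∀ c ∈ Φ, satClause σ c = true

/-- Candidates of the BR-reduction election: the `2p` literals plus the
two anchor candidates `x⊤ = Sum.inr true` and `x⊥ = Sum.inr false`. -/
abbrev Cand (p : ℕ) := Lit p ⊕ Bool

/-- The anchor candidate `x⊤`. -/
def xTop (p : ℕ) : Cand p := Sum.inr true

/-- The anchor candidate `x⊥`. -/
def xBot (p : ℕ) : Cand p := Sum.inr false

instance {p : ℕ} : Nonempty (Cand p) := ⟨Sum.inr true⟩

/-- The first literal of a clause (in listed order) that is true under `σ`. -/
def firstTrueLit {p : ℕ} (σ : Fin p → Bool) (c : Clause3 p) : Option (Lit p) :=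
  if litTrue σ c.1 then some c.1
  else if litTrue σ c.2.1 then some c.2.1
  else if litTrue σ c.2.2 then some c.2.2
  else none

/-- The general-election tally of the BR-reduction election for `Φ` under the
assignment `σ`: `x⊤` gets `q + 2` votes, `x⊥` gets `q + 1` plus one vote per
falsified clause, and each satisfied clause contributes one vote to its first
true literal. -/
def tally {p : ℕ} (Φ : CNF3 p) (σ : Fin p → Bool) : Cand p → ℕ
  | Sum.inr true => Φ.length + 2
  | Sum.inr false => (Φ.length + 1) + (Φ.filter (fun c => !(satClause σ c))).length
  | Sum.inl l => (Φ.filter (fun c => decide (firstTrueLit σ c = some l))).length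

open Classical in
/-- The FPTP winner with respect to the tie-breaking linear order `r`:
the `r`-least candidate among the candidates maximizing the tally `t`. -/
noncomputable def fptpWinner {A : Type*} [Fintype A] [Nonempty A]
    (r : LinearOrder A) (t : A → ℕ) : A :=
  @Finset.min' A r (Finset.univ.filter fun a => ∀ b, t b ≤ t a) (by
    obtain ⟨a, -, ha⟩ := Finset.exists_max_image (Finset.univ : Finset A) t
      ⟨Classical.arbitrary A, Finset.mem_univ _⟩
    exact ⟨a, Finset.mem_filter.mpr ⟨Finset.mem_univ _, fun b => ha b (Finset.mem_univ _)⟩⟩)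

/-- The general-election winner of the BR-reduction election under assignment `σ`,
with tie-breaking order `r`. -/
noncomputable def geWinner {p : ℕ} (Φ : CNF3 p) (r : LinearOrder (Cand p))
    (σ : Fin p → Bool) : Cand p :=
  fptpWinner r (tally Φ σ)

open Classical in
theorem le_tally_fptpWinner {A : Type*} [Fintype A] [Nonempty A]
    (r : LinearOrder A) (t : A → ℕ) (b : A) : t b ≤ t (fptpWinner r t) :=
  (Finset.mem_filter.mp (@Finset.min'_mem A r {a | ∀ b, t b ≤ t a} _)).2 b

section Tally

variable {p : ℕ} (Φ : CNF3 p) (σ : Fin p → Bool)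

theorem tally_inl_le_length (l : Lit p) : tally Φ σ (Sum.inl l) ≤ Φ.length :=
  List.length_filter_le _ _

theorem tally_xTop : tally Φ σ (xTop p) = Φ.length + 2 := rfl

theorem tally_inl_lt_tally_xTop (l : Lit p) : tally Φ σ (Sum.inl l) < tally Φ σ (xTop p) :=
  tally_xTop Φ σ ▸ (tally_inl_le_length Φ σ l).trans_lt (lt_add_of_pos_right _ two_pos)

theorem geWinner_eq_xTop_or_xBot (r : LinearOrder (Cand p)) :
    geWinner Φ r σ = xTop p ∨ geWinner Φ r σ = xBot p := by
  rcases hw : geWinner Φ r σ with l | _ | _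
  · have hmax := le_tally_fptpWinner r (tally Φ σ) (xTop p)
    rw [← geWinner, hw] at hmax
    exact absurd hmax (tally_inl_lt_tally_xTop Φ σ l).not_ge
  · exact Or.inr rfl
  · exact Or.inl rfl

end Tally

theorem stmt2_general {p : ℕ} (Φ : CNF3 p) (r : LinearOrder (Cand p))
    (σ : Fin p → Bool) :
    (∀ l : Lit p,
      tally Φ σ (Sum.inl l) ≤ Φ.length ∧
      tally Φ σ (Sum.inl l) < tally Φ σ (xTop p)) ∧
    (geWinner Φ r σ = xTop p ∨ geWinner Φ r σ = xBot p) :=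
  ⟨fun l => ⟨tally_inl_le_length Φ σ l, tally_inl_lt_tally_xTop Φ σ l⟩,
    geWinner_eq_xTop_or_xBot Φ σ r⟩

/-- in the BR-reduction election for `Φ`, every non-anchor candidate
receives at most `q` votes, strictly fewer than the `q + 2` votes of `x⊤`;
consequently the general-election winner is always `x⊤` or `x⊥`. -/
theorem stmt2 {p : ℕ} (Φ : CNF3 p) (r : LinearOrder (Cand p))
    (hr : r.lt (xBot p) (xTop p)) (σ : Fin p → Bool) :
    (∀ l : Lit p,
      tally Φ σ (Sum.inl l) ≤ Φ.length ∧
      tally Φ σ (Sum.inl l) < tally Φ σ (xTop p)) ∧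
    (geWinner Φ r σ = xTop p ∨ geWinner Φ r σ = xBot p) :=
  stmt2_general Φ r σ
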